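/- arXiv:2311.17781 — 2 statements merged into one kernel-verified Lean document; each statement's English description precedes it below -/
import Mathlib

section
/- Let γ ∈ (0,1) and set λ = 1/(1−γ) − 1 = γ/(1−γ). Let Ã be a symmetric n×n matrix with spectral radius at most 1 and L = I − Ã. For a given matrix S ∈ R^{n×c}, the unique minimizer of the graph signal denoising objective F ↦ ‖F − S‖_F² + λ·tr(FᵀLF) over F ∈ R^{n×c} is F* = (1−γ)(I − γÃ)^{-1} S, i.e., the PPNP propagation applied to S. -/
/-!
With `M = 1 + λL`, the objective is the quadratic `F ↦ tr(Fᵀ M F) - 2 tr(Fᵀ S) + const`, and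
`L = 1 - Ã` is positive semidefinite because every eigenvalue of `Ã` is at most `1`. If `M G = S`,
completing the square gives `obj (G + D) = obj G + tr(Dᵀ D) + λ tr(Dᵀ L D) ≥ obj G + ‖D‖_F²`,
so `G` is the unique minimizer. Finally `(1 - γ) M = 1 - γÃ`, so the PPNP output
`(1 - γ)(1 - γÃ)⁻¹ S` solves `M G = S`.
-/

open Matrix

namespace Matrix

variable {n : Type*} [Fintype n] [DecidableEq n]

open scoped Pointwise in
theorem posSemidef_one_sub_of_hasEigenvalue_le_one {A : Matrix n n ℝ} (hA : A.IsHermitian)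
    (h : ∀ μ : ℝ, Module.End.HasEigenvalue (toLin' A) μ → μ ≤ 1) : (1 - A).PosSemidef := by
  have hH : (1 - A).IsHermitian := isHermitian_one.sub hA
  refine hH.posSemidef_iff_eigenvalues_nonneg.mpr fun i => ?_
  have hmem : hH.eigenvalues i ∈ {1} - spectrum ℝ A := by
    rw [spectrum.singleton_sub_eq, map_one]
    exact hH.eigenvalues_mem_spectrum_real i
  obtain ⟨_, rfl, μ, hμ, he⟩ := hmem
  rw [← spectrum_toLin', ← Module.End.hasEigenvalue_iff_mem_spectrum] at hμ
  simpa [← he] using h μ hμ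

theorem mul_smul_smul_inv_mul {K p : Type*} [Field K] {c : K} (hc : c ≠ 0)
    {M : Matrix n n K} (hM : IsUnit M.det) (S : Matrix n p K) :
    M * (c • ((c • M)⁻¹ * S)) = S := by
  rw [Matrix.mul_smul, ← smul_mul]
  exact mul_nonsing_inv_cancel_left _ _ (by simpa [det_smul, hc] using hM)

end Matrix

section Denoising

variable {R m p : Type*} [CommRing R] [Fintype m] [DecidableEq m] [Fintype p]

def denoisingObjective (S : Matrix m p R) (L : Matrix m m R) (lam : R) (F : Matrix m p R) : R :=
  trace ((F - S)ᵀ * (F - S)) + lam * trace (Fᵀ * L * F)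

theorem denoisingObjective_add_of_mul_eq {S G : Matrix m p R} {L : Matrix m m R} {lam : R}
    (hL : L.IsSymm) (hG : (1 + lam • L) * G = S) (D : Matrix m p R) :
    denoisingObjective S L lam (G + D) =
      denoisingObjective S L lam G + (trace (Dᵀ * D) + lam * trace (Dᵀ * L * D)) := by
  have hcross : trace (Dᵀ * S) = trace (Dᵀ * G) + lam * trace (Dᵀ * L * G) := by
    rw [← hG, Matrix.add_mul, Matrix.one_mul, Matrix.mul_add, trace_add, smul_mul,
      Matrix.mul_smul, trace_smul, smul_eq_mul, Matrix.mul_assoc]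
  have hswap (X Y : Matrix m p R) : trace (Xᵀ * Y) = trace (Yᵀ * X) := by
    rw [← trace_transpose, transpose_mul, transpose_transpose]
  have hswapL : trace (Gᵀ * L * D) = trace (Dᵀ * L * G) := by
    rw [← trace_transpose, transpose_mul, transpose_mul, transpose_transpose, hL.eq,
      Matrix.mul_assoc]
  simp only [denoisingObjective, transpose_add, transpose_sub, Matrix.add_mul, Matrix.mul_add,
    Matrix.sub_mul, Matrix.mul_sub, trace_add, trace_sub]
  linear_combination (-2) * hcross + hswap G D - hswap S D + lam * hswapL

theorem denoisingObjective_add_trace_le {S G : Matrix m p ℝ} {L : Matrix m m ℝ} {lam : ℝ}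
    (hL : L.PosSemidef) (hlam : 0 ≤ lam) (hG : (1 + lam • L) * G = S) (F : Matrix m p ℝ) :
    denoisingObjective S L lam G + trace ((F - G)ᵀ * (F - G)) ≤ denoisingObjective S L lam F := by
  have hquad : 0 ≤ trace ((F - G)ᵀ * L * (F - G)) := by
    simpa using (hL.conjTranspose_mul_mul_same (F - G)).trace_nonneg
  have hsplit := denoisingObjective_add_of_mul_eq (isHermitian_iff_isSymm.mp hL.1) hG (F - G)
  rw [add_sub_cancel] at hsplit
  linarith [mul_nonneg hlam hquad]

theorem denoisingObjective_le_of_mul_eq {S G : Matrix m p ℝ} {L : Matrix m m ℝ} {lam : ℝ}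
    (hL : L.PosSemidef) (hlam : 0 ≤ lam) (hG : (1 + lam • L) * G = S) (F : Matrix m p ℝ) :
    denoisingObjective S L lam G ≤ denoisingObjective S L lam F := by
  have hsq : 0 ≤ trace ((F - G)ᵀ * (F - G)) := by
    simpa using (posSemidef_conjTranspose_mul_self (F - G)).trace_nonneg
  linarith [denoisingObjective_add_trace_le hL hlam hG F]

theorem eq_of_denoisingObjective_eq_of_mul_eq {S G : Matrix m p ℝ} {L : Matrix m m ℝ} {lam : ℝ}
    (hL : L.PosSemidef) (hlam : 0 ≤ lam) (hG : (1 + lam • L) * G = S) {F : Matrix m p ℝ}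
    (hF : denoisingObjective S L lam F = denoisingObjective S L lam G) : F = G := by
  have hle := denoisingObjective_add_trace_le hL hlam hG F
  rw [← conjTranspose_eq_transpose_of_trivial] at hle
  have hzero : trace ((F - G)ᴴ * (F - G)) = 0 :=
    le_antisymm (by linarith) (posSemidef_conjTranspose_mul_self _).trace_nonneg
  exact sub_eq_zero.mp (trace_conjTranspose_mul_self_eq_zero_iff.mp hzero)

end Denoising

/-- With γ ∈ (0,1), λ = γ/(1−γ), Ã symmetric with spectral radius ≤ 1,
L = I − Ã, and S ∈ ℝ^{n×c}, the unique minimizer over F of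
‖F − S‖_F² + λ·tr(FᵀLF) (with ‖M‖_F² written as tr(MᵀM)) is
F* = (1−γ)(I − γÃ)⁻¹ S, the PPNP propagation applied to S. -/
theorem stmt_5 (n c : ℕ) (γ : ℝ) (hγ : γ ∈ Set.Ioo (0 : ℝ) 1)
    (lam : ℝ) (hlam : lam = γ / (1 - γ))
    (A : Matrix (Fin n) (Fin n) ℝ) (hA : A.IsSymm)
    (hspec : ∀ μ : ℝ, Module.End.HasEigenvalue (Matrix.toLin' A) μ → |μ| ≤ 1)
    (L : Matrix (Fin n) (Fin n) ℝ) (hL : L = 1 - A)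
    (S : Matrix (Fin n) (Fin c) ℝ)
    (obj : Matrix (Fin n) (Fin c) ℝ → ℝ)
    (hobj : obj = fun F => Matrix.trace ((F - S)ᵀ * (F - S)) + lam * Matrix.trace (Fᵀ * L * F))
    (Fstar : Matrix (Fin n) (Fin c) ℝ)
    (hFstar : Fstar = (1 - γ) • (((1 : Matrix (Fin n) (Fin n) ℝ) - γ • A)⁻¹ * S)) :
    (∀ F, obj Fstar ≤ obj F) ∧ (∀ F, obj F = obj Fstar → F = Fstar) := by
  obtain ⟨hγ0, hγ1⟩ := hγ
  have h1γ : 1 - γ ≠ 0 := (sub_pos.mpr hγ1).ne'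
  have hLpsd : L.PosSemidef := hL ▸ posSemidef_one_sub_of_hasEigenvalue_le_one
    (isHermitian_iff_isSymm.mpr hA) fun μ hμ => (abs_le.mp (hspec μ hμ)).2
  have hlam0 : 0 ≤ lam := hlam ▸ div_nonneg hγ0.le (sub_pos.mpr hγ1).le
  have hprop : (1 - γ) • (1 + lam • L) = 1 - γ • A := by
    rw [hL, hlam, smul_add, smul_smul, mul_div_cancel₀ _ h1γ]
    module
  have hunit : IsUnit (1 + lam • L).det :=
    isUnit_iff_isUnit_det _ |>.mp (PosDef.one.add_posSemidef (hLpsd.smul hlam0)).isUnit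
  have hstat : (1 + lam • L) * Fstar = S := by
    rw [hFstar, ← hprop]
    exact mul_smul_smul_inv_mul h1γ hunit S
  subst hobj
  exact ⟨denoisingObjective_le_of_mul_eq hLpsd hlam0 hstat,
    fun F => eq_of_denoisingObjective_eq_of_mul_eq hLpsd hlam0 hstat⟩
end

section
/- Let γ ∈ (0,1), |Y| ≥ 2, h, p ∈ (1/|Y|, 1], q ∈ [0, 1/|Y|), and suppose the approximation (|Y|−2)/(|Y|−1) = 1 is used (i.e., replace the factor (|Y|−2)/(|Y|−1) by 1 in β'_q). Then the inequality β_q > β'_q is equivalent to q > 1/|Y| − (γ/(1−γ))·((1 + 1/|Y|)hp − (h+p)/|Y|). -/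
/-- With the approximation (|Y|−2)/(|Y|−1) = 1 in β'_q, the
inequality β_q > β'_q is equivalent to
q > 1/|Y| − (γ/(1−γ))((1 + 1/|Y|)hp − (h+p)/|Y|). -/
theorem stmt_15 (Y : ℕ) (hY : 2 ≤ Y) (h p γ q : ℝ)
    (hh : h ∈ Set.Ioc (1 / (Y : ℝ)) 1) (hp : p ∈ Set.Ioc (1 / (Y : ℝ)) 1)
    (hγ : γ ∈ Set.Ioo (0 : ℝ) 1) (hq : q ∈ Set.Ico 0 (1 / (Y : ℝ)))
    (βq β'q : ℝ)
    (hβq : βq = (1 - γ) * q + γ * h * p + γ * ((1 - h) / ((Y : ℝ) - 1)) * (1 - p))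
    (hβ'q : β'q = (1 - γ) * (1 - q) / ((Y : ℝ) - 1) + γ * (h / ((Y : ℝ) - 1)) * (1 - p)
        + γ * ((1 - h) / ((Y : ℝ) - 1)) * p
        + γ * ((1 - h) / ((Y : ℝ) - 1)) * (1 - p)) :
    βq > β'q ↔
      q > 1 / (Y : ℝ)
          - γ / (1 - γ) * ((1 + 1 / (Y : ℝ)) * h * p - (h + p) / (Y : ℝ)) := by
  have hY1 : (1:ℝ) < (Y:ℝ) := by exact_mod_cast Nat.lt_of_lt_of_le one_lt_two hY
  have hY0 : (0:ℝ) < (Y:ℝ) := by linarith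
  have hd : (0:ℝ) < (Y:ℝ) - 1 := by linarith
  have hg : (0:ℝ) < 1 - γ := by linarith [hγ.2]
  set E : ℝ := (1 - γ) * ((Y:ℝ) * q - 1) + γ * (((Y:ℝ) + 1) * h * p - (h + p)) with hE
  have key : βq - β'q = E / ((Y:ℝ) - 1) := by
    rw [hβq, hβ'q, hE]; field_simp; ring
  have key2 : q - (1 / (Y : ℝ)
      - γ / (1 - γ) * ((1 + 1 / (Y : ℝ)) * h * p - (h + p) / (Y : ℝ)))
      = E / ((1 - γ) * (Y:ℝ)) := by
    rw [hE]; field_simp; ring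
  have e1 : βq > β'q ↔ 0 < E := by
    rw [gt_iff_lt, ← sub_pos, key, lt_div_iff₀ hd, zero_mul]
  have e2 : (q > 1 / (Y : ℝ)
      - γ / (1 - γ) * ((1 + 1 / (Y : ℝ)) * h * p - (h + p) / (Y : ℝ))) ↔ 0 < E := by
    rw [gt_iff_lt, ← sub_pos, key2, lt_div_iff₀ (mul_pos hg hY0), zero_mul]
  exact e1.trans e2.symm
end
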